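/- arXiv:1305.6048 — 3 statements merged into one kernel-verified Lean document; each statement's English description precedes it below -/
import Mathlib

section
/- In an anti-Fock representation with normalized anti-Fock vector Ψ₋₁ satisfying a⁺Ψ₋₁ = 0 and (Ψ₋₁, Ψ₋₁) = 1, the vectors Ψ₋ₙ := aⁿ⁻¹Ψ₋₁/√((n−1)!) satisfy (Ψ₋ₙ, Ψ₋ₙ) = (−1)^{n−1} for all n ∈ ℕ, n ≥ 1. -/
/-!
Commuting `a⁺` through `aᵏ⁺¹` with the CCR gives `a⁺ aᵏ⁺¹ Ψ = -(k + 1) aᵏ Ψ` when `a⁺ Ψ = 0`: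
the anti-Fock vector behaves like a Fock vacuum with the sign of the commutator reversed.
Moving one `a` across the form as `a⁺` then yields `(aᵏ⁺¹Ψ, aᵏ⁺¹Ψ) = -(k + 1) (aᵏΨ, aᵏΨ)`,
so `(aᵏΨ, aᵏΨ) = (-1)ᵏ k!`, and dividing by `√k!` twice leaves the sign.
-/

open scoped Nat

theorem mul_pow_succ_of_mul_sub_mul_eq_one {A : Type*} [Ring A] {a b : A} (h : a * b - b * a = 1)
    (n : ℕ) : b * a ^ (n + 1) = a ^ (n + 1) * b - (n + 1 : ℕ) * a ^ n := by
  have hba : b * a = a * b - 1 := by rw [← h]; abel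
  induction n with
  | zero => simp [hba]
  | succ n ih =>
    calc b * a ^ (n + 2) = b * a ^ (n + 1) * a := by rw [pow_succ _ (n + 1), mul_assoc]
      _ = a ^ (n + 1) * (b * a) - (n + 1 : ℕ) * a ^ (n + 1) := by
          rw [ih, sub_mul, mul_assoc, mul_assoc, ← pow_succ]
      _ = a ^ (n + 2) * b - (n + 2 : ℕ) * a ^ (n + 1) := by
          rw [hba]; push_cast; noncomm_ring

section AntiFock

variable {R V : Type*} [CommRing R] [AddCommGroup V] [Module R V] {a ad : Module.End R V}
  {Ψ : V}

theorem apply_pow_succ_apply_eq_neg_smul (hccr : a * ad - ad * a = 1) (hΨ : ad Ψ = 0) (k : ℕ) :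
    ad ((a ^ (k + 1)) Ψ) = -(k + 1 : R) • (a ^ k) Ψ := by
  have := LinearMap.congr_fun (mul_pow_succ_of_mul_sub_mul_eq_one hccr k) Ψ
  simp only [Module.End.mul_apply, LinearMap.sub_apply, Module.End.natCast_apply, hΨ, map_zero,
    zero_sub] at this
  rw [this]
  module

variable [StarRing R] (B : V →ₗ⋆[R] V →ₗ[R] R)

theorem form_pow_apply_self (hccr : a * ad - ad * a = 1) (hadj : ∀ x y, B (a x) y = B x (ad y))
    (hΨ : ad Ψ = 0) (hnorm : B Ψ Ψ = 1) (k : ℕ) :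
    B ((a ^ k) Ψ) ((a ^ k) Ψ) = (-1) ^ k * k ! := by
  induction k with
  | zero => simp [hnorm]
  | succ k ih =>
    calc B ((a ^ (k + 1)) Ψ) ((a ^ (k + 1)) Ψ)
        = B ((a ^ k) Ψ) (ad ((a ^ (k + 1)) Ψ)) := by rw [pow_succ', Module.End.mul_apply, hadj]
      _ = -(k + 1 : R) * ((-1) ^ k * k !) := by
          rw [apply_pow_succ_apply_eq_neg_smul hccr hΨ, map_smul, ih, smul_eq_mul]
      _ = (-1) ^ (k + 1) * (k + 1)! := by rw [Nat.factorial_succ]; push_cast; ring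

end AntiFock

theorem LinearMap.sesq_ofReal_smul_self {V : Type*} [AddCommGroup V] [Module ℂ V]
    (B : V →ₗ⋆[ℂ] V →ₗ[ℂ] ℂ) (r : ℝ) (x : V) :
    B ((r : ℂ) • x) ((r : ℂ) • x) = ((r ^ 2 : ℝ) : ℂ) * B x x := by
  rw [B.map_smulₛₗ, LinearMap.smul_apply, map_smul, smul_eq_mul, smul_eq_mul, Complex.conj_ofReal]
  push_cast; ring

theorem antiFock_norms_alternate_general
    {V : Type*} [AddCommGroup V] [Module ℂ V]
    (B : V →ₗ⋆[ℂ] V →ₗ[ℂ] ℂ)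
    (a ad : Module.End ℂ V)
    (hccr : a * ad - ad * a = 1)
    (hadj : ∀ x y, B (a x) y = B x (ad y))
    (Ψ : V) (hΨ : ad Ψ = 0) (hnorm : B Ψ Ψ = 1) :
    ∀ n : ℕ, 1 ≤ n →
      B (((Real.sqrt (Nat.factorial (n - 1)) : ℂ))⁻¹ • (a ^ (n - 1)) Ψ)
        (((Real.sqrt (Nat.factorial (n - 1)) : ℂ))⁻¹ • (a ^ (n - 1)) Ψ)
        = (-1 : ℂ) ^ (n - 1) := by
  intro n hn
  obtain ⟨k, rfl⟩ := Nat.exists_eq_add_of_le' hn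
  have hsqrt_sq : (√(k ! : ℝ))⁻¹ ^ 2 = (k ! : ℝ)⁻¹ := by
    rw [inv_pow, Real.sq_sqrt (Nat.cast_nonneg _)]
  rw [Nat.add_sub_cancel, ← Complex.ofReal_inv, B.sesq_ofReal_smul_self, hsqrt_sq,
    form_pow_apply_self B hccr hadj hΨ hnorm]
  have hfact : (k ! : ℂ) ≠ 0 := Nat.cast_ne_zero.2 k.factorial_ne_zero
  push_cast
  field_simp

/-- In an anti-Fock representation with `a⁺Ψ₋₁ = 0` and `(Ψ₋₁,Ψ₋₁) = 1`, the
normalized vectors `Ψ₋ₙ = aⁿ⁻¹Ψ₋₁/√((n−1)!)` satisfy `(Ψ₋ₙ,Ψ₋ₙ) = (−1)^{n−1}`. -/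
theorem antiFock_norms_alternate
    {V : Type*} [AddCommGroup V] [Module ℂ V]
    (B : V →ₗ⋆[ℂ] V →ₗ[ℂ] ℂ)
    (a ad : Module.End ℂ V)
    (hccr : a * ad - ad * a = 1)
    (hadj : ∀ x y, B (a x) y = B x (ad y))
    (hadj' : ∀ x y, B (ad x) y = B x (a y))
    (Ψ : V) (hΨ : ad Ψ = 0) (hnorm : B Ψ Ψ = 1) :
    ∀ n : ℕ, 1 ≤ n →
      B (((Real.sqrt (Nat.factorial (n - 1)) : ℂ))⁻¹ • (a ^ (n - 1)) Ψ)
        (((Real.sqrt (Nat.factorial (n - 1)) : ℂ))⁻¹ • (a ^ (n - 1)) Ψ)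
        = (-1 : ℂ) ^ (n - 1) :=
  antiFock_norms_alternate_general B a ad hccr hadj Ψ hΨ hnorm
end

section
/- In an anti-Fock representation, the eigenvectors Ψ₋ₙ of the number operator N = a⁺a with a⁺Ψ₋₁ = 0 satisfy N Ψ₋ₙ = −n Ψ₋ₙ for all n ≥ 1, where Ψ₋ₙ = aⁿ⁻¹Ψ₋₁/√((n−1)!). -/
/-- In an anti-Fock representation, the vectors `Ψ₋ₙ = aⁿ⁻¹Ψ₋₁/√((n−1)!)` are
eigenvectors of the number operator `N = a⁺a` with eigenvalue `−n`. -/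
theorem antiFock_number_operator_eigenvalues
    {V : Type*} [AddCommGroup V] [Module ℂ V]
    (a ad : Module.End ℂ V)
    (hccr : a * ad - ad * a = 1)
    (Ψ : V) (hΨ : ad Ψ = 0) (hΨne : Ψ ≠ 0) :
    ∀ n : ℕ, 1 ≤ n →
      (ad * a) (((Real.sqrt (Nat.factorial (n - 1)) : ℂ))⁻¹ • (a ^ (n - 1)) Ψ)
        = (-(n : ℂ)) • (((Real.sqrt (Nat.factorial (n - 1)) : ℂ))⁻¹ • (a ^ (n - 1)) Ψ) := by
  have key : ∀ k : ℕ, (ad * a) ((a ^ k) Ψ) = (-(k + 1 : ℂ)) • (a ^ k) Ψ := by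
    intro k
    induction k with
    | zero =>
        have h1 : a * ad = ad * a + 1 := by
          linear_combination (norm := noncomm_ring) hccr
        have : (ad * a) Ψ = (a * ad) Ψ - Ψ := by
          rw [h1]; simp [Module.End.mul_apply]
        simp only [Module.End.mul_apply, hΨ, map_zero, zero_sub] at this
        simp only [pow_zero, Module.End.mul_apply, Module.End.one_apply]
        rw [this]
        norm_num
    | succ k ih =>
        have hcomm : (ad * a) * a = a * (ad * a) - a := by
          have : a * (ad * a) - a = (ad * a) * a := by
            linear_combination (norm := noncomm_ring) hccr * a
          exact this.symm
        have : ((ad * a) * a) ((a ^ k) Ψ) = (a * (ad * a) - a) ((a ^ k) Ψ) := by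
          rw [hcomm]
        simp only [Module.End.mul_apply, LinearMap.sub_apply] at this ⊢
        rw [pow_succ']
        simp only [Module.End.mul_apply]
        simp only [Module.End.mul_apply] at ih
        rw [this, ih]
        simp only [map_smul]
        push_cast
        module
  intro n hn
  have h := key (n - 1)
  have hn1 : ((n : ℂ) - 1) + 1 = (n : ℂ) := by ring
  have hcast : ((n - 1 : ℕ) : ℂ) = (n : ℂ) - 1 := by
    have := Nat.cast_sub (R := ℂ) hn
    simpa using this
  rw [map_smul, h, hcast, hn1, smul_comm]
end

section
/- If P and Q are symmetric operators on a common dense invariant domain with [Q, P] = iI, then there is no vector Ψ ≠ 0 in the domain that is a simultaneous eigenvector of both P and Q; in fact [Q, P] = iI implies that neither P nor Q can be bounded operators on the whole Hilbert space (Wintner–Wielandt). -/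
/-!
A common eigenvector `Ψ` of `p` and `q` is killed by every commutator of `p` and `q`,
whereas `[q, p] Ψ = i Ψ ≠ 0`.

For bounded operators, `a * b - b * a = 1` gives `a * b ^ (n + 1) - b ^ (n + 1) * a = (n + 1) • b ^ n`,
hence `(n + 1) ‖b ^ n‖ ≤ 2 ‖a‖ ‖b‖ ‖b ^ n‖`. Since no power of `b` vanishes (a vanishing `b ^ (n + 1)`
would force `b ^ n = 0`, down to `1 = 0`), this bounds every `n + 1` by `2 ‖a‖ ‖b‖`.
-/

theorem LinearMap.commutator_apply_eq_zero_of_apply_eq_smul {K V : Type*} [CommRing K]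
    [AddCommGroup V] [Module K V] {f g : V →ₗ[K] V} {x : V} {μ ν : K}
    (hf : f x = μ • x) (hg : g x = ν • x) : g (f x) - f (g x) = 0 := by
  rw [hf, hg, map_smul, map_smul, hf, hg, smul_smul, smul_smul, mul_comm, sub_self]

section Wielandt

theorem mul_pow_succ_sub_pow_succ_mul {R : Type*} [Ring R] {a b : R}
    (h : a * b - b * a = 1) (n : ℕ) :
    a * b ^ (n + 1) - b ^ (n + 1) * a = (n + 1) • b ^ n := by
  induction n with
  | zero => simpa using h
  | succ n ih =>
    calc a * b ^ (n + 2) - b ^ (n + 2) * a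
        = (a * b ^ (n + 1) - b ^ (n + 1) * a) * b + b ^ (n + 1) * (a * b - b * a) := by
          simp only [pow_succ]; noncomm_ring
      _ = (n + 2) • b ^ (n + 1) := by
          rw [ih, h, smul_mul_assoc, ← pow_succ, mul_one, ← succ_nsmul]

variable {R : Type*} [NormedRing R] [NormedSpace ℝ R] {a b : R}

theorem succ_mul_norm_pow_le (h : a * b - b * a = 1) (n : ℕ) :
    (n + 1) * ‖b ^ n‖ ≤ 2 * ‖a‖ * ‖b ^ (n + 1)‖ :=
  calc (n + 1) * ‖b ^ n‖ = ‖a * b ^ (n + 1) - b ^ (n + 1) * a‖ := by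
        rw [mul_pow_succ_sub_pow_succ_mul h, RCLike.norm_nsmul ℝ, nsmul_eq_mul]; push_cast; rfl
    _ ≤ ‖a‖ * ‖b ^ (n + 1)‖ + ‖b ^ (n + 1)‖ * ‖a‖ :=
        (norm_sub_le _ _).trans (add_le_add (norm_mul_le _ _) (norm_mul_le _ _))
    _ = 2 * ‖a‖ * ‖b ^ (n + 1)‖ := by ring

theorem pow_ne_zero_of_mul_sub_mul_eq_one [Nontrivial R] (h : a * b - b * a = 1) (n : ℕ) :
    b ^ n ≠ 0 := by
  induction n with
  | zero => simp
  | succ n ih =>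
    intro hzero
    have := succ_mul_norm_pow_le h n
    rw [hzero, norm_zero, mul_zero] at this
    exact ih (norm_le_zero_iff.mp (nonpos_of_mul_nonpos_right this (by positivity)))

theorem mul_sub_mul_ne_one [Nontrivial R] (a b : R) : a * b - b * a ≠ 1 := by
  intro h
  have bound (n : ℕ) : (n + 1 : ℝ) ≤ 2 * ‖a‖ * ‖b‖ := by
    have hpos : 0 < ‖b ^ n‖ := norm_pos_iff.mpr (pow_ne_zero_of_mul_sub_mul_eq_one h n)
    refine le_of_mul_le_mul_right ?_ hpos
    calc (n + 1) * ‖b ^ n‖ ≤ 2 * ‖a‖ * ‖b ^ (n + 1)‖ := succ_mul_norm_pow_le h n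
      _ ≤ 2 * ‖a‖ * (‖b‖ * ‖b ^ n‖) := by
          rw [pow_succ']; gcongr; exact norm_mul_le _ _
      _ = 2 * ‖a‖ * ‖b‖ * ‖b ^ n‖ := by ring
  obtain ⟨n, hn⟩ := exists_nat_gt (2 * ‖a‖ * ‖b‖)
  linarith [bound n]

end Wielandt

theorem Wintner_Wielandt_general
    {H : Type*} [NormedAddCommGroup H] [InnerProductSpace ℂ H]
    [Nontrivial H]
    (D : Submodule ℂ H)
    (p q : H →ₗ[ℂ] H)
    (hccr : ∀ x ∈ D, q (p x) - p (q x) = Complex.I • x) :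
    (¬ ∃ Ψ : H, Ψ ∈ D ∧ Ψ ≠ 0 ∧ ∃ μ ν : ℂ, p Ψ = μ • Ψ ∧ q Ψ = ν • Ψ) ∧
    (∀ P' Q' : H →L[ℂ] H, Q' * P' - P' * Q' ≠ Complex.I • 1) := by
  constructor
  · rintro ⟨Ψ, hΨD, hΨne, μ, ν, hp, hq⟩
    have hIΨ : Complex.I • Ψ = 0 := by
      rw [← hccr Ψ hΨD, LinearMap.commutator_apply_eq_zero_of_apply_eq_smul hp hq]
    exact hΨne ((smul_eq_zero.mp hIΨ).resolve_left Complex.I_ne_zero)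
  · intro P' Q' h
    apply mul_sub_mul_ne_one (-Complex.I • Q') P'
    rw [smul_mul_assoc, mul_smul_comm, ← smul_sub, h, smul_smul]
    simp

/-- If symmetric `P, Q` on a common dense invariant domain satisfy `[Q, P] = iI`,
then (1) they have no common eigenvector in the domain, and (2) the relation
`[Q, P] = iI` cannot be realized by bounded operators on the whole Hilbert space
(Wintner–Wielandt). -/
theorem Wintner_Wielandt
    {H : Type*} [NormedAddCommGroup H] [InnerProductSpace ℂ H] [CompleteSpace H]
    [Nontrivial H]
    (D : Submodule ℂ H) (hdense : Dense (D : Set H))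
    (p q : H →ₗ[ℂ] H)
    (hpD : ∀ x ∈ D, p x ∈ D) (hqD : ∀ x ∈ D, q x ∈ D)
    (hpsym : ∀ x ∈ D, ∀ y ∈ D, (inner ℂ (p x) y : ℂ) = inner ℂ x (p y))
    (hqsym : ∀ x ∈ D, ∀ y ∈ D, (inner ℂ (q x) y : ℂ) = inner ℂ x (q y))
    (hccr : ∀ x ∈ D, q (p x) - p (q x) = Complex.I • x) :
    (¬ ∃ Ψ : H, Ψ ∈ D ∧ Ψ ≠ 0 ∧ ∃ μ ν : ℂ, p Ψ = μ • Ψ ∧ q Ψ = ν • Ψ) ∧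
    (∀ P' Q' : H →L[ℂ] H, Q' * P' - P' * Q' ≠ Complex.I • 1) :=
  Wintner_Wielandt_general D p q hccr
end
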